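/- (Proposition 1, momentum part.) Let n be a positive integer, g ∈ ℝⁿ a row vector, H an n×n real matrix with H·H = 0, and μ, γ real numbers. Define the MIFGSM-with-APAA iterates G_1 = g, Δ_1 = γ·g, and for every t ≥ 1: G_{t+1} = μ·G_t + (g + Δ_t H) and Δ_{t+1} = Δ_t + γ·G_{t+1}, where Δ_t H denotes the row-vector–matrix product. Then for every m ≥ 1, the accumulated momentum satisfies G_m = a_m·g + (b_m·γ)·(g H), where a_m and b_m are the MIFGSM-with-APAA coefficient sequences. -/

import Mathlib

/-- First-order gradient coefficient: a_m = ∑_{i=1}^{m} μ^{i-1}. -/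
noncomputable def aCoef (μ : ℝ) (m : ℕ) : ℝ :=
  ∑ i ∈ Finset.Icc 1 m, μ ^ (i - 1)

/-- Second-order gradient coefficient: b_m = ∑_{i=2}^{m} (m-i+1)(i-1)μ^{i-2}. -/
noncomputable def bCoef (μ : ℝ) (m : ℕ) : ℝ :=
  ∑ i ∈ Finset.Icc 2 m, ((m : ℝ) - (i : ℝ) + 1) * ((i : ℝ) - 1) * μ ^ (i - 2)

/-- First-order perturbation coefficient: c_m = ∑_{i=1}^{m} (m-i+1)μ^{i-1}. -/
noncomputable def cCoef (μ : ℝ) (m : ℕ) : ℝ :=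
  ∑ i ∈ Finset.Icc 1 m, ((m : ℝ) - (i : ℝ) + 1) * μ ^ (i - 1)

/-- Second-order perturbation coefficient:
    d_m = ∑_{i=2}^{m} ((m-i+2)(m-i+1)(i-1)/2)μ^{i-2}. -/
noncomputable def dCoef (μ : ℝ) (m : ℕ) : ℝ :=
  ∑ i ∈ Finset.Icc 2 m,
    (((m : ℝ) - (i : ℝ) + 2) * ((m : ℝ) - (i : ℝ) + 1) * ((i : ℝ) - 1) / 2) * μ ^ (i - 2)

/-
Under `H * H = 0` the map `v ↦ v H` kills `g H`, so every iterate stays in the span of `g` and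
`g H`. Tracking the coordinates of `G_t` and `Δ_t` in that span gives the recurrences
`a_{m+1} = μ a_m + 1`, `b_{m+1} = μ b_m + c_m`, `c_{m+1} = c_m + a_{m+1}`, `d_{m+1} = d_m + b_{m+1}`,
which the four sums satisfy.
-/

open Finset

section Coefficients

variable (μ : ℝ)

lemma aCoef_eq_sum_range (m : ℕ) : aCoef μ m = ∑ i ∈ range m, μ ^ i := by
  rw [aCoef, ← Ico_add_one_right_eq_Icc, sum_Ico_eq_sum_range]
  exact sum_congr rfl fun i _ => by congr 1; omega

lemma cCoef_eq_sum_range (m : ℕ) : cCoef μ m = ∑ i ∈ range m, ((m : ℝ) - i) * μ ^ i := by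
  rw [cCoef, ← Ico_add_one_right_eq_Icc, sum_Ico_eq_sum_range]
  refine sum_congr rfl fun i _ => ?_
  rw [show 1 + i - 1 = i by omega]
  push_cast
  ring

lemma bCoef_succ_eq_sum_range (m : ℕ) :
    bCoef μ (m + 1) = ∑ i ∈ range m, ((m : ℝ) - i) * (i + 1) * μ ^ i := by
  rw [bCoef, ← Ico_add_one_right_eq_Icc, sum_Ico_eq_sum_range]
  refine sum_congr rfl fun i _ => ?_
  rw [show 2 + i - 2 = i by omega]
  push_cast
  ring

lemma dCoef_succ_eq_sum_range (m : ℕ) :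
    dCoef μ (m + 1) = ∑ i ∈ range m, ((m : ℝ) - i + 1) * (m - i) * (i + 1) / 2 * μ ^ i := by
  rw [dCoef, ← Ico_add_one_right_eq_Icc, sum_Ico_eq_sum_range]
  refine sum_congr rfl fun i _ => ?_
  rw [show 2 + i - 2 = i by omega]
  push_cast
  ring

@[simp] lemma aCoef_one : aCoef μ 1 = 1 := by simp [aCoef]

@[simp] lemma bCoef_one : bCoef μ 1 = 0 := by simp [bCoef]

@[simp] lemma cCoef_one : cCoef μ 1 = 1 := by simp [cCoef]

@[simp] lemma dCoef_one : dCoef μ 1 = 0 := by simp [dCoef]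

lemma aCoef_succ (m : ℕ) : aCoef μ (m + 1) = μ * aCoef μ m + 1 := by
  simp only [aCoef_eq_sum_range, sum_range_succ', mul_sum, pow_succ, pow_zero, mul_comm]

lemma cCoef_succ (m : ℕ) : cCoef μ (m + 1) = cCoef μ m + aCoef μ (m + 1) := by
  have hc : cCoef μ m = ∑ i ∈ range (m + 1), ((m : ℝ) - i) * μ ^ i := by
    simp [cCoef_eq_sum_range, sum_range_succ]
  rw [cCoef_eq_sum_range, hc, aCoef_eq_sum_range, ← sum_add_distrib]
  refine sum_congr rfl fun i _ => ?_
  push_cast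
  ring

lemma bCoef_succ (m : ℕ) : bCoef μ (m + 1) = μ * bCoef μ m + cCoef μ m := by
  cases m with
  | zero => simp [bCoef, cCoef]
  | succ k =>
    rw [bCoef_succ_eq_sum_range, bCoef_succ_eq_sum_range, cCoef_eq_sum_range, sum_range_succ',
      sum_range_succ' (fun i => ((k + 1 : ℕ) - (i : ℝ)) * μ ^ i), mul_sum, ← add_assoc,
      ← sum_add_distrib]
    congr 1
    · refine sum_congr rfl fun i _ => ?_
      push_cast
      ring
    · push_cast
      ring

lemma dCoef_succ (m : ℕ) : dCoef μ (m + 1) = dCoef μ m + bCoef μ (m + 1) := by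
  cases m with
  | zero => simp [bCoef, dCoef]
  | succ k =>
    have hd : dCoef μ (k + 1) =
        ∑ i ∈ range (k + 1), ((k : ℝ) - i + 1) * (k - i) * (i + 1) / 2 * μ ^ i := by
      simp [dCoef_succ_eq_sum_range, sum_range_succ]
    rw [dCoef_succ_eq_sum_range, hd, bCoef_succ_eq_sum_range, ← sum_add_distrib]
    refine sum_congr rfl fun i _ => ?_
    push_cast
    ring

end Coefficients

theorem apaa_iterate_closed_form {M : Type*} [AddCommGroup M] [Module ℝ M] (f : M →ₗ[ℝ] M)
    (g : M) (hfg : f (f g) = 0) (μ γ : ℝ) (G Δ : ℕ → M)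
    (hG1 : G 1 = g) (hΔ1 : Δ 1 = γ • g)
    (hG : ∀ t, 1 ≤ t → G (t + 1) = μ • G t + (g + f (Δ t)))
    (hΔ : ∀ t, 1 ≤ t → Δ (t + 1) = Δ t + γ • G (t + 1)) (m : ℕ) (hm : 1 ≤ m) :
    G m = aCoef μ m • g + (bCoef μ m * γ) • f g ∧
      Δ m = (cCoef μ m * γ) • g + (dCoef μ m * γ * γ) • f g := by
  induction m, hm using Nat.le_induction with
  | base => simp [hG1, hΔ1]
  | succ m hm ih =>
    obtain ⟨hGm, hΔm⟩ := ih
    have hGs : G (m + 1) = aCoef μ (m + 1) • g + (bCoef μ (m + 1) * γ) • f g := by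
      rw [hG m hm, hGm, hΔm, map_add, map_smul, map_smul, hfg, aCoef_succ, bCoef_succ]
      module
    refine ⟨hGs, ?_⟩
    rw [hΔ m hm, hΔm, hGs, cCoef_succ, dCoef_succ]
    module

theorem mifgsm_apaa_momentum_closed_form_general
    (n : ℕ) (g : Fin n → ℝ) (H : Matrix (Fin n) (Fin n) ℝ)
    (hH : H * H = 0) (μ γ : ℝ)
    (G Δ : ℕ → Fin n → ℝ)
    (hG1 : G 1 = g) (hΔ1 : Δ 1 = γ • g)
    (hG : ∀ t : ℕ, 1 ≤ t → G (t + 1) = μ • G t + (g + Matrix.vecMul (Δ t) H))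
    (hΔ : ∀ t : ℕ, 1 ≤ t → Δ (t + 1) = Δ t + γ • G (t + 1)) :
    ∀ m : ℕ, 1 ≤ m →
      G m = aCoef μ m • g + (bCoef μ m * γ) • Matrix.vecMul g H := by
  have hgH : Matrix.vecMul (Matrix.vecMul g H) H = 0 := by
    rw [Matrix.vecMul_vecMul, hH, Matrix.vecMul_zero]
  exact fun m hm =>
    (apaa_iterate_closed_form (Matrix.vecMulLinear H) g hgH μ γ G Δ hG1 hΔ1 hG hΔ m hm).1

/-- Proposition 1, momentum part: under the first-order model (H·H = 0), the MIFGSM-with-APAA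
    momentum satisfies G_m = a_m·g + (b_m·γ)·(gH) for every m ≥ 1. -/
theorem mifgsm_apaa_momentum_closed_form
    (n : ℕ) (hn : 0 < n) (g : Fin n → ℝ) (H : Matrix (Fin n) (Fin n) ℝ)
    (hH : H * H = 0) (μ γ : ℝ)
    (G Δ : ℕ → Fin n → ℝ)
    (hG1 : G 1 = g) (hΔ1 : Δ 1 = γ • g)
    (hG : ∀ t : ℕ, 1 ≤ t → G (t + 1) = μ • G t + (g + Matrix.vecMul (Δ t) H))
    (hΔ : ∀ t : ℕ, 1 ≤ t → Δ (t + 1) = Δ t + γ • G (t + 1)) :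
    ∀ m : ℕ, 1 ≤ m →
      G m = aCoef μ m • g + (bCoef μ m * γ) • Matrix.vecMul g H :=
  mifgsm_apaa_momentum_closed_form_general n g H hH μ γ G Δ hG1 hΔ1 hG hΔ
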